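/- Let B, C, E and T be n×n complex Hermitian positive semidefinite matrices, let σ² > 0 and P ≥ 0 be real numbers. For every n×n complex Hermitian positive semidefinite matrix X satisfying the power constraint Tr(TX) ≤ P, there exists a vector z ∈ ℂⁿ such that z^H T z ≤ P and (z^H B z)/(z^H C z + z^H E z + σ²) ≥ Tr(BX)/(Tr(CX) + Tr(EX) + σ²). Consequently, the semidefinite relaxation of the beamforming problem is tight: the supremum of the fractional objective Tr(BX)/(Tr(CX)+Tr(EX)+σ²) over Hermitian positive semidefinite X with Tr(TX) ≤ P is not larger than its supremum over rank-one feasible matrices X = zz^H. -/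

import Mathlib

open Matrix
open scoped ComplexOrder

/-- trace of `A * w wᴴ` is the quadratic form. -/
lemma trace_mul_vecMulVec {n : ℕ} (A : Matrix (Fin n) (Fin n) ℂ) (w : Fin n → ℂ) :
    (A * vecMulVec w (star w)).trace = star w ⬝ᵥ A.mulVec w := by
  simp only [trace, diag_apply, mul_apply, vecMulVec_apply, dotProduct, mulVec,
    Pi.star_apply, Finset.mul_sum]
  congr 1; ext j; congr 1; ext k; ring

lemma vecMulVec_posSemidef {n : ℕ} (z : Fin n → ℂ) :
    (vecMulVec z (star z)).PosSemidef := by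
  rw [posSemidef_iff_dotProduct_mulVec]
  constructor
  · ext i j
    simp [vecMulVec_apply, conjTranspose_apply, mul_comm]
  · intro x
    have h : star x ⬝ᵥ (vecMulVec z (star z)).mulVec x
        = star (star z ⬝ᵥ x) * (star z ⬝ᵥ x) := by
      simp only [dotProduct, mulVec, vecMulVec_apply, Pi.star_apply, star_sum, star_mul',
        star_star, Finset.mul_sum, Finset.sum_mul]
      rw [Finset.sum_comm]
      congr 1; ext j; congr 1; ext k; ring
    rw [h]
    exact star_mul_self_nonneg _

lemma quad_smul {n : ℕ} (A : Matrix (Fin n) (Fin n) ℂ) (v : Fin n → ℂ) (r : ℝ) :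
    (star ((r : ℂ) • v) ⬝ᵥ A.mulVec ((r : ℂ) • v)).re
      = r ^ 2 * (star v ⬝ᵥ A.mulVec v).re := by
  have : star ((r : ℂ) • v) ⬝ᵥ A.mulVec ((r : ℂ) • v)
      = ((r : ℂ) * (r : ℂ)) * (star v ⬝ᵥ A.mulVec v) := by
    rw [star_smul, mulVec_smul, smul_dotProduct, dotProduct_smul]
    simp [smul_eq_mul]; ring
  rw [this, ← Complex.ofReal_mul, Complex.re_ofReal_mul]
  ring

/-- The key selection lemma. -/
lemma exists_good_index {n : ℕ} (b d t : Fin n → ℝ) (hb : ∀ i, 0 ≤ b i)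
    (ht : ∀ i, 0 ≤ t i) (P σ2 α : ℝ) (hσ : 0 < σ2) (hP : 0 ≤ P)
    (hα : 0 < α) (hαb : α = ∑ i, b i) (htP : ∑ i, t i ≤ P)
    (g : Fin n → ℝ) (hg : ∀ i, g i = (∑ j, d j + σ2) * b i - α * d i) :
    ∃ i, 0 < g i ∧ α * σ2 * t i ≤ P * g i := by
  by_contra hcon
  push_neg at hcon
  have hsum : ∑ i, g i = α * σ2 := by
    simp only [hg, Finset.sum_sub_distrib, ← Finset.mul_sum, ← Finset.sum_mul, ← hαb]
    ring
  have hposα : 0 < α * σ2 := mul_pos hα hσ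
  have hex : ∃ i ∈ Finset.univ, (0 : ℝ) < g i := by
    by_contra h
    push_neg at h
    have : ∑ i, g i ≤ 0 := Finset.sum_nonpos (fun i hi => h i hi)
    linarith [hsum ▸ this]
  obtain ⟨i0, _, hi0⟩ := hex
  have hle : ∀ i ∈ Finset.univ, P * g i ≤ α * σ2 * t i := by
    intro i _
    by_cases hgi : 0 < g i
    · exact (hcon i hgi).le
    · push_neg at hgi
      have h1 : P * g i ≤ 0 := mul_nonpos_of_nonneg_of_nonpos hP hgi
      have h2 : 0 ≤ α * σ2 * t i := mul_nonneg hposα.le (ht i)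
      linarith
  have hstrict : ∑ i, P * g i < ∑ i, α * σ2 * t i :=
    Finset.sum_lt_sum hle ⟨i0, Finset.mem_univ i0, hcon i0 hi0⟩
  rw [← Finset.mul_sum, ← Finset.mul_sum, hsum] at hstrict
  have : α * σ2 * (∑ i, t i) ≤ α * σ2 * P := by
    exact mul_le_mul_of_nonneg_left htP hposα.le
  linarith

/-- Tightness of the semidefinite relaxation of the secure-beamforming problem: every PSD
matrix `X` feasible for the power constraint `Tr(T X) ≤ P` is dominated in the fractional
objective by a rank-one feasible solution `z zᴴ`; consequently the supremum of the
objective over PSD feasible matrices is at most its supremum over rank-one feasible ones. -/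
theorem sdr_tightness {n : ℕ} (B C E T : Matrix (Fin n) (Fin n) ℂ)
    (hB : B.PosSemidef) (hC : C.PosSemidef) (hE : E.PosSemidef) (hT : T.PosSemidef)
    (σ2 P : ℝ) (hσ : 0 < σ2) (hP : 0 ≤ P) :
    (∀ X : Matrix (Fin n) (Fin n) ℂ, X.PosSemidef → ((T * X).trace).re ≤ P →
      ∃ z : Fin n → ℂ,
        (star z ⬝ᵥ T.mulVec z).re ≤ P ∧
        ((B * X).trace).re / (((C * X).trace).re + ((E * X).trace).re + σ2) ≤
          (star z ⬝ᵥ B.mulVec z).re /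
            ((star z ⬝ᵥ C.mulVec z).re + (star z ⬝ᵥ E.mulVec z).re + σ2)) ∧
    sSup {v : ℝ | ∃ X : Matrix (Fin n) (Fin n) ℂ, X.PosSemidef ∧
        ((T * X).trace).re ≤ P ∧
        v = ((B * X).trace).re / (((C * X).trace).re + ((E * X).trace).re + σ2)} ≤
      sSup {v : ℝ | ∃ z : Fin n → ℂ, (star z ⬝ᵥ T.mulVec z).re ≤ P ∧
        v = (star z ⬝ᵥ B.mulVec z).re /
          ((star z ⬝ᵥ C.mulVec z).re + (star z ⬝ᵥ E.mulVec z).re + σ2)} := by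
  -- main pointwise claim
  have main : ∀ X : Matrix (Fin n) (Fin n) ℂ, X.PosSemidef → ((T * X).trace).re ≤ P →
      ∃ z : Fin n → ℂ,
        (star z ⬝ᵥ T.mulVec z).re ≤ P ∧
        ((B * X).trace).re / (((C * X).trace).re + ((E * X).trace).re + σ2) ≤
          (star z ⬝ᵥ B.mulVec z).re /
            ((star z ⬝ᵥ C.mulVec z).re + (star z ⬝ᵥ E.mulVec z).re + σ2) := by
    intro X hX hXP
    obtain ⟨M, hM⟩ : ∃ M : Matrix (Fin n) (Fin n) ℂ, X = Mᴴ * M := by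
      open scoped MatrixOrder in
      obtain ⟨M, hM⟩ := CStarAlgebra.nonneg_iff_eq_star_mul_self.mp hX.nonneg
      exact ⟨M, by rw [hM, star_eq_conjTranspose]⟩
    set w : Fin n → Fin n → ℂ := fun i => star (M i) with hw
    have hdecomp : X = ∑ i, vecMulVec (w i) (star (w i)) := by
      ext j k
      simp only [hM, mul_apply, conjTranspose_apply, Matrix.sum_apply, vecMulVec_apply,
        hw, Pi.star_apply, star_star]
    have htr : ∀ A : Matrix (Fin n) (Fin n) ℂ,
        ((A * X).trace).re = ∑ i, (star (w i) ⬝ᵥ A.mulVec (w i)).re := by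
      intro A
      rw [hdecomp, Matrix.mul_sum, trace_sum, Complex.re_sum]
      exact Finset.sum_congr rfl fun i _ => by rw [trace_mul_vecMulVec]
    set b : Fin n → ℝ := fun i => (star (w i) ⬝ᵥ B.mulVec (w i)).re with hbdef
    set c : Fin n → ℝ := fun i => (star (w i) ⬝ᵥ C.mulVec (w i)).re with hcdef
    set e : Fin n → ℝ := fun i => (star (w i) ⬝ᵥ E.mulVec (w i)).re with hedef
    set t : Fin n → ℝ := fun i => (star (w i) ⬝ᵥ T.mulVec (w i)).re with htdef
    have hbpos : ∀ v : Fin n → ℂ, 0 ≤ (star v ⬝ᵥ B.mulVec v).re :=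
      fun v => (Complex.nonneg_iff.mp (hB.dotProduct_mulVec_nonneg v)).1
    have hcpos : ∀ v : Fin n → ℂ, 0 ≤ (star v ⬝ᵥ C.mulVec v).re :=
      fun v => (Complex.nonneg_iff.mp (hC.dotProduct_mulVec_nonneg v)).1
    have hepos : ∀ v : Fin n → ℂ, 0 ≤ (star v ⬝ᵥ E.mulVec v).re :=
      fun v => (Complex.nonneg_iff.mp (hE.dotProduct_mulVec_nonneg v)).1
    have htpos : ∀ v : Fin n → ℂ, 0 ≤ (star v ⬝ᵥ T.mulVec v).re :=
      fun v => (Complex.nonneg_iff.mp (hT.dotProduct_mulVec_nonneg v)).1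
    have htrB : ((B * X).trace).re = ∑ i, b i := htr B
    have htrC : ((C * X).trace).re = ∑ i, c i := htr C
    have htrE : ((E * X).trace).re = ∑ i, e i := htr E
    have htrT : ((T * X).trace).re = ∑ i, t i := htr T
    have hCnn : 0 ≤ ((C * X).trace).re := htrC ▸ Finset.sum_nonneg fun i _ => hcpos _
    have hEnn : 0 ≤ ((E * X).trace).re := htrE ▸ Finset.sum_nonneg fun i _ => hepos _
    have hden : 0 < ((C * X).trace).re + ((E * X).trace).re + σ2 := by linarith
    set α : ℝ := ((B * X).trace).re with hαdef
    by_cases hα : α ≤ 0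
    · refine ⟨0, ?_, ?_⟩
      · simpa using hP
      · have h1 : α / (((C * X).trace).re + ((E * X).trace).re + σ2) ≤ 0 :=
          div_nonpos_of_nonpos_of_nonneg hα hden.le
        have h2 : (star (0 : Fin n → ℂ) ⬝ᵥ B.mulVec 0).re /
            ((star (0 : Fin n → ℂ) ⬝ᵥ C.mulVec 0).re +
              (star (0 : Fin n → ℂ) ⬝ᵥ E.mulVec 0).re + σ2) = 0 := by
          simp
        rw [h2]; exact h1
    · push_neg at hα
      set d : Fin n → ℝ := fun i => c i + e i with hddef
      set δ : ℝ := ∑ i, d i with hδdef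
      have hδeq : δ = ((C * X).trace).re + ((E * X).trace).re := by
        rw [hδdef, htrC, htrE, ← Finset.sum_add_distrib]
      set g : Fin n → ℝ := fun i => (δ + σ2) * b i - α * d i with hgdef
      obtain ⟨i, hgi, hsel⟩ := exists_good_index b d t (fun i => hbpos _)
        (fun i => htpos _) P σ2 α hσ hP hα (htrB ▸ rfl) (htrT ▸ hXP) g
        (fun i => by rw [hgdef, hδdef])
      set s : ℝ := α * σ2 / g i with hsdef
      have hs : 0 < s := div_pos (mul_pos hα hσ) hgi
      have hsg : s * g i = α * σ2 := div_mul_cancel₀ _ hgi.ne'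
      refine ⟨(Real.sqrt s : ℂ) • w i, ?_, ?_⟩
      · rw [quad_smul, Real.sq_sqrt hs.le]
        have : s * t i ≤ P := by
          rw [hsdef, div_mul_eq_mul_div, div_le_iff₀ hgi]
          linarith [hsel]
        exact this
      · rw [quad_smul, quad_smul, quad_smul, Real.sq_sqrt hs.le]
        have hnum : (star (w i) ⬝ᵥ B.mulVec (w i)).re = b i := rfl
        have hc : (star (w i) ⬝ᵥ C.mulVec (w i)).re = c i := rfl
        have he : (star (w i) ⬝ᵥ E.mulVec (w i)).re = e i := rfl
        rw [hnum, hc, he]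
        have hden2 : 0 < s * c i + s * e i + σ2 := by
          have := mul_nonneg hs.le (hcpos (w i))
          have := mul_nonneg hs.le (hepos (w i))
          linarith
        have hdenδ : 0 < δ + σ2 := by rw [hδeq]; exact hden
        rw [← hδeq, div_le_div_iff₀ hdenδ hden2]
        have hkey : s * ((δ + σ2) * b i) - s * (α * d i) = α * σ2 := by
          have : s * g i = s * ((δ + σ2) * b i - α * d i) := by rw [hgdef]
          linarith [hsg ▸ this, this ▸ hsg]
        have hdi : d i = c i + e i := rfl
        rw [hdi] at hkey
        nlinarith [hkey]
  refine ⟨main, ?_⟩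
  set S1 : Set ℝ := {v : ℝ | ∃ X : Matrix (Fin n) (Fin n) ℂ, X.PosSemidef ∧
        ((T * X).trace).re ≤ P ∧
        v = ((B * X).trace).re / (((C * X).trace).re + ((E * X).trace).re + σ2)} with hS1
  set S2 : Set ℝ := {v : ℝ | ∃ z : Fin n → ℂ, (star z ⬝ᵥ T.mulVec z).re ≤ P ∧
        v = (star z ⬝ᵥ B.mulVec z).re /
          ((star z ⬝ᵥ C.mulVec z).re + (star z ⬝ᵥ E.mulVec z).re + σ2)} with hS2
  have hsub : S2 ⊆ S1 := by
    rintro v ⟨z, hz, rfl⟩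
    refine ⟨vecMulVec z (star z), vecMulVec_posSemidef z, ?_, ?_⟩
    · rw [trace_mul_vecMulVec]; exact hz
    · rw [trace_mul_vecMulVec, trace_mul_vecMulVec, trace_mul_vecMulVec]
  by_cases hbdd : BddAbove S2
  · have hne1 : S1.Nonempty := by
      refine ⟨0, 0, Matrix.PosSemidef.zero, ?_, ?_⟩ <;> simp [hP]
    apply csSup_le hne1
    rintro v ⟨X, hX, hXP, rfl⟩
    obtain ⟨z, hz, hle⟩ := main X hX hXP
    exact le_trans hle (le_csSup hbdd ⟨z, hz, rfl⟩)
  · have hbdd1 : ¬BddAbove S1 := fun h => hbdd (h.mono hsub)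
    rw [Real.sSup_of_not_bddAbove hbdd, Real.sSup_of_not_bddAbove hbdd1]
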